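/- arXiv:1112.0663 — 4 statements merged into one kernel-verified Lean document; each statement's English description precedes it below -/
import Mathlib

section
/- For every r > 1 there exist constants C > 0 and M > 1 such that for all t > 0 and all x ∈ ℝ: ∫_{-∞}^{∞} t^{-1/2} exp(-|x-y|²/t) (1+|y|)^{-r} dy ≤ C[ min(t^{-1/2}, (1+|x|)^{-r}) + (1+√t)^{-1} exp(-|x|²/(M t)) ]. -/
/-!
Write `K = ∫ (1 + |y|)^(-r) dy` and split the integral at `|y| = |x|/2`. Where `|y| ≥ |x|/2` the
profile is at most `2^r (1 + |x|)^(-r)`, so that part is bounded both by `K t^(-1/2)` and by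
`2^r √π (1 + |x|)^(-r)`, hence by a multiple of the minimum. Where `|y| < |x|/2` we have
`|x - y| ≥ |x|/2`, so half of the Gaussian exponent yields the factor `exp (-x² / (8t))`; the
remaining Gaussian `exp (-(x - y)² / (2t))` convolved with the profile is at most
`min (K, √(2πt))`, and `t^(-1/2) min (K, √(2πt)) ≤ (K + √(2π)) / (1 + √t)`.
-/

open MeasureTheory Real

lemma min_mul_le_add_mul_min {a b u v : ℝ} (ha : 0 ≤ a) (hb : 0 ≤ b) (hu : 0 ≤ u) (hv : 0 ≤ v) :
    min (a * u) (b * v) ≤ (a + b) * min u v := by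
  rcases min_cases u v with ⟨h, _⟩ | ⟨h, _⟩ <;> rw [h]
  · exact (min_le_left _ _).trans (mul_le_mul_of_nonneg_right (le_add_of_nonneg_right hb) hu)
  · exact (min_le_right _ _).trans (mul_le_mul_of_nonneg_right (le_add_of_nonneg_left ha) hv)

lemma min_div_le_add_div_one_add {a b s : ℝ} (hs : 0 < s) :
    min (a / s) b ≤ (a + b) / (1 + s) := by
  rw [le_div_iff₀ (by positivity), mul_one_add]
  have : min (a / s) b * s ≤ a :=
    (mul_le_mul_of_nonneg_right (min_le_left _ _) hs.le).trans_eq (div_mul_cancel₀ a hs.ne')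
  linarith [min_le_right (a / s) b]

lemma exp_neg_sq_sub_div_le_of_half_le {x y t : ℝ} (ht : 0 < t) (h : |x| / 2 ≤ |x - y|) :
    exp (-(x - y) ^ 2 / t) ≤ exp (-x ^ 2 / (8 * t)) * exp (-(x - y) ^ 2 / (2 * t)) := by
  have hsq : x ^ 2 / 4 ≤ (x - y) ^ 2 := by
    have := pow_le_pow_left₀ (by positivity) h 2
    rw [div_pow, sq_abs, sq_abs] at this
    linarith
  rw [← exp_add, exp_le_exp, div_add_div _ _ (by positivity) (by positivity),
    div_le_div_iff₀ ht (by positivity)]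
  nlinarith [mul_le_mul_of_nonneg_right hsq (by positivity : (0:ℝ) ≤ 16 * t ^ 2)]

lemma one_add_abs_rpow_neg_le_of_half_le {r x y : ℝ} (hr : 0 ≤ r) (h : |x| / 2 ≤ |y|) :
    (1 + |y|) ^ (-r) ≤ 2 ^ r * (1 + |x|) ^ (-r) := by
  calc (1 + |y|) ^ (-r) ≤ ((1 + |x|) / 2) ^ (-r) :=
        rpow_le_rpow_of_nonpos (by positivity) (by linarith [abs_nonneg x]) (by linarith)
    _ = 2 ^ r * (1 + |x|) ^ (-r) := by
        rw [div_rpow (by positivity) zero_le_two, rpow_neg zero_le_two, div_inv_eq_mul, mul_comm]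

lemma integral_exp_neg_sq_sub_div (x c : ℝ) :
    ∫ y, exp (-(x - y) ^ 2 / c) = √(π * c) := by
  have := integral_sub_left_eq_self (fun y : ℝ => exp (-c⁻¹ * y ^ 2)) volume x
  simp only [integral_gaussian, div_inv_eq_mul] at this
  rw [← this]
  congr 1; ext y; ring_nf

lemma integrable_exp_neg_sq_sub_div (x : ℝ) {c : ℝ} (hc : 0 < c) :
    Integrable fun y => exp (-(x - y) ^ 2 / c) := by
  convert (integrable_exp_neg_mul_sq (inv_pos.2 hc)).comp_sub_left x using 2
  ring_nf

lemma integrable_one_add_abs_rpow_neg {r : ℝ} (hr : 1 < r) :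
    Integrable fun y : ℝ => (1 + |y|) ^ (-r) := by
  simpa using integrable_one_add_norm (E := ℝ) (μ := volume) (r := r) (by simpa using hr)

lemma one_add_abs_rpow_neg_le_one {r : ℝ} (hr : 0 ≤ r) (y : ℝ) : (1 + |y|) ^ (-r) ≤ 1 :=
  rpow_le_one_of_one_le_of_nonpos (by simp) (by linarith)

lemma integral_exp_neg_sq_sub_div_mul_profile_le_integral {r c : ℝ} (hr : 1 < r) (hc : 0 ≤ c)
    (x : ℝ) : ∫ y, exp (-(x - y) ^ 2 / c) * (1 + |y|) ^ (-r) ≤ ∫ y, (1 + |y|) ^ (-r) := by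
  refine integral_mono_of_nonneg (.of_forall fun y => by positivity)
    (integrable_one_add_abs_rpow_neg hr) (.of_forall fun y => ?_)
  exact mul_le_of_le_one_left (by positivity) (exp_le_one_iff.2 (by
    exact div_nonpos_of_nonpos_of_nonneg (by nlinarith) hc))

lemma measurableSet_setOf_half_abs_le_abs (x : ℝ) : MeasurableSet {y : ℝ | |x| / 2 ≤ |y|} :=
  measurableSet_le measurable_const measurable_abs

section GaussianProfile

variable {r : ℝ} (hr : 0 ≤ r) {c : ℝ} (hc : 0 < c) (x : ℝ)
include hr hc

lemma integrable_exp_neg_sq_sub_div_mul_profile :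
    Integrable fun y => exp (-(x - y) ^ 2 / c) * (1 + |y|) ^ (-r) := by
  refine (integrable_exp_neg_sq_sub_div x hc).mono' (by fun_prop) (.of_forall fun y => ?_)
  rw [norm_of_nonneg (by positivity)]
  exact mul_le_of_le_one_right (exp_nonneg _) (one_add_abs_rpow_neg_le_one hr y)

lemma integral_exp_neg_sq_sub_div_mul_profile_le_sqrt :
    ∫ y, exp (-(x - y) ^ 2 / c) * (1 + |y|) ^ (-r) ≤ √(π * c) := by
  rw [← integral_exp_neg_sq_sub_div x c]
  exact integral_mono_of_nonneg (.of_forall fun y => by positivity)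
    (integrable_exp_neg_sq_sub_div x hc) (.of_forall fun y =>
      mul_le_of_le_one_right (exp_nonneg _) (one_add_abs_rpow_neg_le_one hr y))

lemma setIntegral_near_exp_neg_sq_sub_div_mul_profile_le :
    ∫ y in {y | |x| / 2 ≤ |y|}, exp (-(x - y) ^ 2 / c) * (1 + |y|) ^ (-r) ≤
      2 ^ r * (1 + |x|) ^ (-r) * √(π * c) := by
  have hS := measurableSet_setOf_half_abs_le_abs x
  have hgauss := (integrable_exp_neg_sq_sub_div x hc).mul_const (2 ^ r * (1 + |x|) ^ (-r))
  calc ∫ y in {y | |x| / 2 ≤ |y|}, exp (-(x - y) ^ 2 / c) * (1 + |y|) ^ (-r)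
      ≤ ∫ y in {y | |x| / 2 ≤ |y|}, exp (-(x - y) ^ 2 / c) * (2 ^ r * (1 + |x|) ^ (-r)) :=
        setIntegral_mono_on (integrable_exp_neg_sq_sub_div_mul_profile hr hc x).integrableOn
          hgauss.integrableOn hS fun y hy =>
            mul_le_mul_of_nonneg_left (one_add_abs_rpow_neg_le_of_half_le hr hy)
              (exp_nonneg _)
    _ ≤ ∫ y, exp (-(x - y) ^ 2 / c) * (2 ^ r * (1 + |x|) ^ (-r)) :=
        setIntegral_le_integral hgauss (.of_forall fun y => by positivity)
    _ = 2 ^ r * (1 + |x|) ^ (-r) * √(π * c) := by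
        rw [integral_mul_const, integral_exp_neg_sq_sub_div, mul_comm]

lemma setIntegral_far_exp_neg_sq_sub_div_mul_profile_le :
    ∫ y in {y | |x| / 2 ≤ |y|}ᶜ, exp (-(x - y) ^ 2 / c) * (1 + |y|) ^ (-r) ≤
      exp (-x ^ 2 / (8 * c)) * ∫ y, exp (-(x - y) ^ 2 / (2 * c)) * (1 + |y|) ^ (-r) := by
  have hS := measurableSet_setOf_half_abs_le_abs x
  have hwide := (integrable_exp_neg_sq_sub_div_mul_profile hr (c := 2 * c) (by positivity)
    x).const_mul (exp (-x ^ 2 / (8 * c)))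
  rw [← integral_const_mul]
  calc ∫ y in {y | |x| / 2 ≤ |y|}ᶜ, exp (-(x - y) ^ 2 / c) * (1 + |y|) ^ (-r)
      ≤ ∫ y in {y | |x| / 2 ≤ |y|}ᶜ,
          exp (-x ^ 2 / (8 * c)) * (exp (-(x - y) ^ 2 / (2 * c)) * (1 + |y|) ^ (-r)) :=
        setIntegral_mono_on (integrable_exp_neg_sq_sub_div_mul_profile hr hc x).integrableOn
          hwide.integrableOn hS.compl fun y hy => by
            have hxy : |x| / 2 ≤ |x - y| := by
              have := abs_sub_abs_le_abs_sub x y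
              have : |y| < |x| / 2 := not_le.1 hy
              linarith
            rw [← mul_assoc]
            exact mul_le_mul_of_nonneg_right (exp_neg_sq_sub_div_le_of_half_le hc hxy)
              (by positivity)
    _ ≤ _ := setIntegral_le_integral hwide (.of_forall fun y => by positivity)

end GaussianProfile

section HeatKernelSplit

variable {r : ℝ} (hr : 1 < r) {t : ℝ} (ht : 0 < t) (x : ℝ)
include hr ht

lemma inv_sqrt_mul_setIntegral_near_le :
    (√t)⁻¹ * ∫ y in {y | |x| / 2 ≤ |y|}, exp (-(x - y) ^ 2 / t) * (1 + |y|) ^ (-r) ≤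
      ((∫ y, (1 + |y|) ^ (-r)) + 2 ^ r * √π) * min (√t)⁻¹ ((1 + |x|) ^ (-r)) := by
  have hr0 : 0 ≤ r := by linarith
  have hprofile : ∫ y in {y | |x| / 2 ≤ |y|}, exp (-(x - y) ^ 2 / t) * (1 + |y|) ^ (-r) ≤
      ∫ y, (1 + |y|) ^ (-r) :=
    (setIntegral_le_integral (integrable_exp_neg_sq_sub_div_mul_profile hr0 ht x)
      (.of_forall fun y => by positivity)).trans
      (integral_exp_neg_sq_sub_div_mul_profile_le_integral hr ht.le x)
  have hgauss := setIntegral_near_exp_neg_sq_sub_div_mul_profile_le hr0 ht x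
  rw [sqrt_mul pi_pos.le] at hgauss
  refine le_trans (le_min ?_ ?_) (min_mul_le_add_mul_min (by positivity) (by positivity)
    (by positivity) (by positivity))
  · rw [mul_comm _ (√t)⁻¹]
    exact mul_le_mul_of_nonneg_left hprofile (by positivity)
  · calc (√t)⁻¹ * _ ≤ (√t)⁻¹ * (2 ^ r * (1 + |x|) ^ (-r) * (√π * √t)) := by gcongr
      _ = 2 ^ r * √π * (1 + |x|) ^ (-r) := by field_simp

lemma inv_sqrt_mul_setIntegral_far_le :
    (√t)⁻¹ * ∫ y in {y | |x| / 2 ≤ |y|}ᶜ, exp (-(x - y) ^ 2 / t) * (1 + |y|) ^ (-r) ≤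
      ((∫ y, (1 + |y|) ^ (-r)) + √(2 * π)) * ((1 + √t)⁻¹ * exp (-x ^ 2 / (8 * t))) := by
  have hr0 : 0 ≤ r := by linarith
  have hsqrt : 0 < √t := sqrt_pos.2 ht
  have h2t : 0 < 2 * t := by positivity
  set J := ∫ y, exp (-(x - y) ^ 2 / (2 * t)) * (1 + |y|) ^ (-r)
  have hJ : (√t)⁻¹ * J ≤ ((∫ y, (1 + |y|) ^ (-r)) + √(2 * π)) / (1 + √t) := by
    refine le_trans (le_min ?_ ?_) (min_div_le_add_div_one_add hsqrt)
    · rw [div_eq_inv_mul]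
      exact mul_le_mul_of_nonneg_left
        (integral_exp_neg_sq_sub_div_mul_profile_le_integral hr h2t.le x) (by positivity)
    · have := integral_exp_neg_sq_sub_div_mul_profile_le_sqrt hr0 h2t x
      rw [← mul_assoc, mul_comm π, sqrt_mul (by positivity)] at this
      calc (√t)⁻¹ * J ≤ (√t)⁻¹ * (√(2 * π) * √t) := by gcongr
        _ = √(2 * π) := by field_simp
  calc (√t)⁻¹ * ∫ y in {y | |x| / 2 ≤ |y|}ᶜ, exp (-(x - y) ^ 2 / t) * (1 + |y|) ^ (-r)
      ≤ (√t)⁻¹ * (exp (-x ^ 2 / (8 * t)) * J) := by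
        gcongr
        exact setIntegral_far_exp_neg_sq_sub_div_mul_profile_le hr0 ht x
    _ = exp (-x ^ 2 / (8 * t)) * ((√t)⁻¹ * J) := by ring
    _ ≤ exp (-x ^ 2 / (8 * t)) * (((∫ y, (1 + |y|) ^ (-r)) + √(2 * π)) / (1 + √t)) := by
        gcongr
    _ = _ := by ring

end HeatKernelSplit

/-- Convolution of a heat-kernel Gaussian with an algebraically decaying profile. -/
theorem gaussian_conv_algebraic_min (r : ℝ) (hr : 1 < r) :
    ∃ C > (0:ℝ), ∃ M > (1:ℝ), ∀ t > (0:ℝ), ∀ x : ℝ,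
      (∫ y : ℝ, t ^ (-(1:ℝ)/2) * Real.exp (-(x - y)^2 / t) * (1 + |y|) ^ (-r)) ≤
        C * (min (t ^ (-(1:ℝ)/2)) ((1 + |x|) ^ (-r)) +
          (1 + Real.sqrt t)⁻¹ * Real.exp (-x^2 / (M * t))) := by
  set K := ∫ y : ℝ, (1 + |y|) ^ (-r)
  refine ⟨(K + 2 ^ r * √π) + (K + √(2 * π)), by positivity, 8, by norm_num, fun t ht x => ?_⟩
  have hpow : t ^ (-(1:ℝ)/2) = (√t)⁻¹ := by
    rw [sqrt_eq_rpow, ← rpow_neg ht.le, neg_div]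
  have hS := measurableSet_setOf_half_abs_le_abs x
  simp_rw [hpow, mul_assoc]
  rw [integral_const_mul, ← integral_add_compl hS
    (integrable_exp_neg_sq_sub_div_mul_profile (by linarith) ht x), mul_add]
  calc _ ≤ (K + 2 ^ r * √π) * min (√t)⁻¹ ((1 + |x|) ^ (-r)) +
        (K + √(2 * π)) * ((1 + √t)⁻¹ * exp (-x ^ 2 / (8 * t))) :=
      add_le_add (inv_sqrt_mul_setIntegral_near_le hr ht x)
        (inv_sqrt_mul_setIntegral_far_le hr ht x)
    _ ≤ _ := by
      have hmin : 0 ≤ min (√t)⁻¹ ((1 + |x|) ^ (-r)) := by positivity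
      have htail : 0 ≤ (1 + √t)⁻¹ * exp (-x ^ 2 / (8 * t)) := by positivity
      nlinarith [mul_nonneg (by positivity : 0 ≤ K + 2 ^ r * √π) htail,
        mul_nonneg (by positivity : 0 ≤ K + √(2 * π)) hmin]
end

section
/- For every r > 1 there exist constants C > 0 and M > 1 such that for all t > 0 and all x ∈ ℝ: ∫_{-∞}^{∞} t^{-1/2} exp(-|x-y|²/t) (1+|y|)^{-r} dy ≤ C[ (1+|x|+√t)^{-r} + (1+√t)^{-1} exp(-|x|²/(M t)) ]. -/
/-!
Split the integral at `|y| = |x| / 2`. Where `|y| > |x| / 2` the weight `(1 + |y|) ^ (-r)` is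
at most `2 ^ r (1 + |x|) ^ (-r)` and the Gaussian integrates to `√(π t)`. Where `|y| ≤ |x| / 2`
we have `|x - y| ≥ |x| / 2`, so half of the Gaussian yields the factor `exp (-x ^ 2 / (8 t))`;
what remains is bounded both by `√(2π)` (the weight is at most `1`) and by `t ^ (-1/2)` times
the integral of the weight (the Gaussian is at most `1`), i.e. by a multiple of `(1 + √t)⁻¹`. This gives the claim when `√t ≤ 1 + |x|`; when
`√t > 1 + |x|` the second bound alone suffices, since then `exp (-x ^ 2 / (8 t)) ≥ e⁻¹`.
-/

open MeasureTheory Real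

noncomputable def gaussianSmoothing (s : ℝ) (w : ℝ → ℝ) (x : ℝ) : ℝ :=
  ∫ y, exp (-(x - y) ^ 2 / s) * w y

lemma exp_neg_sq_div_le_one {s : ℝ} (hs : 0 ≤ s) (z : ℝ) : exp (-z ^ 2 / s) ≤ 1 :=
  exp_le_one_iff.2 (div_nonpos_of_nonpos_of_nonneg (neg_nonpos.2 (sq_nonneg z)) hs)

lemma exp_neg_sq_div_le_exp_mul_exp {t x z : ℝ} (ht : 0 < t) (hxz : x ^ 2 ≤ 4 * z ^ 2) :
    exp (-z ^ 2 / t) ≤ exp (-x ^ 2 / (8 * t)) * exp (-z ^ 2 / (2 * t)) := by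
  rw [← exp_add, exp_le_exp, div_add_div _ _ (by positivity) (by positivity),
    div_le_div_iff₀ ht (by positivity)]
  nlinarith [mul_le_mul_of_nonneg_left hxz (mul_self_nonneg t)]

lemma integrable_exp_neg_sub_sq_div {s : ℝ} (hs : 0 < s) (x : ℝ) :
    Integrable fun y => exp (-(x - y) ^ 2 / s) := by
  refine ((integrable_exp_neg_mul_sq (inv_pos.2 hs)).comp_sub_left x).congr
    (ae_of_all _ fun y => ?_)
  simp only
  congr 1
  ring

lemma integral_exp_neg_sub_sq_div (s x : ℝ) :
    ∫ y, exp (-(x - y) ^ 2 / s) = √(π * s) := by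
  have h (y : ℝ) : exp (-(x - y) ^ 2 / s) = exp (-s⁻¹ * (x - y) ^ 2) := by
    congr 1
    ring
  simp_rw [h]
  rw [integral_sub_left_eq_self (fun u => exp (-s⁻¹ * u ^ 2)), integral_gaussian, div_inv_eq_mul]

lemma rpow_neg_le_two_rpow_mul_rpow_neg {a b r : ℝ} (ha : 0 < a) (hab : a ≤ 2 * b) (hr : 0 ≤ r) :
    b ^ (-r) ≤ 2 ^ r * a ^ (-r) :=
  calc b ^ (-r) ≤ (a / 2) ^ (-r) :=
        rpow_le_rpow_of_nonpos (by positivity) (by linarith) (by linarith)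
    _ = 2 ^ r * a ^ (-r) := by
        rw [div_rpow ha.le zero_le_two, rpow_neg zero_le_two, div_eq_mul_inv, inv_inv, mul_comm]

lemma le_two_mul_add_div_one_add {a p q u : ℝ} (hu : 0 < u) (hp : 0 ≤ p) (hq : 0 ≤ q)
    (hap : a ≤ p) (haq : a ≤ q / u) : a ≤ 2 * (p + q) / (1 + u) := by
  rw [le_div_iff₀ hu] at haq
  rw [le_div_iff₀ (by positivity)]
  rcases le_total u 1 with h | h <;> rcases le_total a 0 with ha | ha <;> nlinarith

section

variable {w : ℝ → ℝ} {s : ℝ}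

lemma integral_rpow_neg_half_mul_exp_mul_eq {t : ℝ} (ht : 0 ≤ t) (x : ℝ) :
    ∫ y, t ^ (-(1:ℝ)/2) * exp (-(x - y) ^ 2 / t) * w y = (√t)⁻¹ * gaussianSmoothing t w x := by
  rw [gaussianSmoothing, ← integral_const_mul, sqrt_eq_rpow, ← rpow_neg ht]
  simp_rw [mul_assoc]
  norm_num

lemma integrable_exp_neg_sub_sq_div_mul (hw : Integrable w) (hs : 0 < s) (x : ℝ) :
    Integrable fun y => exp (-(x - y) ^ 2 / s) * w y :=
  hw.bdd_mul (integrable_exp_neg_sub_sq_div hs x).aestronglyMeasurable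
    (ae_of_all _ fun y => by
      rw [norm_of_nonneg (exp_pos _).le]
      exact exp_neg_sq_div_le_one hs.le (x - y))

lemma gaussianSmoothing_le_sqrt (hw : Integrable w) (hw1 : ∀ y, w y ≤ 1) (hs : 0 < s) (x : ℝ) :
    gaussianSmoothing s w x ≤ √(π * s) := by
  rw [← integral_exp_neg_sub_sq_div s x]
  refine integral_mono (integrable_exp_neg_sub_sq_div_mul hw hs x)
    (integrable_exp_neg_sub_sq_div hs x) fun y => ?_
  simpa using mul_le_mul_of_nonneg_left (hw1 y) (exp_pos (-(x - y) ^ 2 / s)).le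

lemma gaussianSmoothing_le_integral (hw : Integrable w) (hw0 : ∀ y, 0 ≤ w y) (hs : 0 < s)
    (x : ℝ) : gaussianSmoothing s w x ≤ ∫ y, w y :=
  integral_mono (integrable_exp_neg_sub_sq_div_mul hw hs x) hw fun y => by
    simpa using mul_le_mul_of_nonneg_right (exp_neg_sq_div_le_one hs.le (x - y)) (hw0 y)

lemma inv_sqrt_mul_gaussianSmoothing_le (hw : Integrable w) (hw0 : ∀ y, 0 ≤ w y)
    (hw1 : ∀ y, w y ≤ 1) {a t : ℝ} (ha : 0 < a) (ht : 0 < t) (x : ℝ) :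
    (√t)⁻¹ * gaussianSmoothing (a * t) w x ≤ 2 * (√(π * a) + ∫ y, w y) / (1 + √t) := by
  have hst : 0 < √t := sqrt_pos.2 ht
  refine le_two_mul_add_div_one_add hst (sqrt_nonneg _) (integral_nonneg hw0) ?_ ?_
  · calc (√t)⁻¹ * gaussianSmoothing (a * t) w x ≤ (√t)⁻¹ * √(π * (a * t)) :=
          mul_le_mul_of_nonneg_left (gaussianSmoothing_le_sqrt hw hw1 (by positivity) x)
            (by positivity)
      _ = √(π * a) := by
          rw [← mul_assoc, sqrt_mul (by positivity) t]
          field_simp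
  · rw [inv_mul_eq_div]
    exact div_le_div_of_nonneg_right (gaussianSmoothing_le_integral hw hw0 (by positivity) x)
      hst.le

lemma gaussianSmoothing_le_of_le_of_half_lt_abs (hw : Integrable w) (hw0 : ∀ y, 0 ≤ w y)
    {t B x : ℝ} (ht : 0 < t) (hB : ∀ y, |x| / 2 < |y| → w y ≤ B) :
    gaussianSmoothing t w x ≤
      B * √(π * t) + exp (-x ^ 2 / (8 * t)) * gaussianSmoothing (2 * t) w x := by
  have hB0 : 0 ≤ B :=
    (hw0 _).trans (hB (|x| + 1) (by
      rw [abs_of_nonneg (by positivity : (0 : ℝ) ≤ |x| + 1)]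
      linarith [abs_nonneg x]))
  rw [gaussianSmoothing, gaussianSmoothing, ← integral_exp_neg_sub_sq_div t x,
    ← integral_const_mul, ← integral_const_mul, ← integral_add]
  rotate_left
  · exact (integrable_exp_neg_sub_sq_div ht x).const_mul B
  · exact (integrable_exp_neg_sub_sq_div_mul hw (by positivity) x).const_mul _
  refine integral_mono (integrable_exp_neg_sub_sq_div_mul hw ht x)
    (((integrable_exp_neg_sub_sq_div ht x).const_mul B).add
      ((integrable_exp_neg_sub_sq_div_mul hw (by positivity) x).const_mul _)) fun y => ?_
  have hfar : 0 ≤ B * exp (-(x - y) ^ 2 / t) := by positivity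
  have hnear : 0 ≤ exp (-x ^ 2 / (8 * t)) * (exp (-(x - y) ^ 2 / (2 * t)) * w y) :=
    mul_nonneg (exp_pos _).le (mul_nonneg (exp_pos _).le (hw0 y))
  rcases le_or_gt |y| (|x| / 2) with hy | hy
  · have hxy : x ^ 2 ≤ 4 * (x - y) ^ 2 := by
      nlinarith [abs_sub_abs_le_abs_sub x y, sq_abs x, sq_abs (x - y), abs_nonneg x]
    have := mul_le_mul_of_nonneg_right (exp_neg_sq_div_le_exp_mul_exp ht hxy) (hw0 y)
    rw [mul_assoc] at this
    exact this.trans (le_add_of_nonneg_left hfar)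
  · have := mul_le_mul_of_nonneg_left (hB y hy) (exp_pos (-(x - y) ^ 2 / t)).le
    rw [mul_comm _ B] at this
    exact this.trans (le_add_of_nonneg_right hnear)

lemma inv_sqrt_mul_gaussianSmoothing_le_of_le_of_half_lt_abs (hw : Integrable w)
    (hw0 : ∀ y, 0 ≤ w y) (hw1 : ∀ y, w y ≤ 1) {t B x : ℝ} (ht : 0 < t)
    (hB : ∀ y, |x| / 2 < |y| → w y ≤ B) :
    (√t)⁻¹ * gaussianSmoothing t w x ≤
      B * √π + 2 * (√(π * 2) + ∫ y, w y) * ((1 + √t)⁻¹ * exp (-x ^ 2 / (8 * t))) :=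
  calc (√t)⁻¹ * gaussianSmoothing t w x
      ≤ (√t)⁻¹ * (B * √(π * t) + exp (-x ^ 2 / (8 * t)) * gaussianSmoothing (2 * t) w x) :=
        mul_le_mul_of_nonneg_left (gaussianSmoothing_le_of_le_of_half_lt_abs hw hw0 ht hB)
          (by positivity)
    _ = B * √π + exp (-x ^ 2 / (8 * t)) * ((√t)⁻¹ * gaussianSmoothing (2 * t) w x) := by
        rw [sqrt_mul pi_pos.le]
        field_simp [(sqrt_pos.2 ht).ne']
    _ ≤ B * √π + exp (-x ^ 2 / (8 * t)) * (2 * (√(π * 2) + ∫ y, w y) / (1 + √t)) := by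
        gcongr
        exact inv_sqrt_mul_gaussianSmoothing_le hw hw0 hw1 two_pos ht x
    _ = _ := by ring

lemma inv_sqrt_mul_gaussianSmoothing_le_of_sq_le (hw : Integrable w) (hw0 : ∀ y, 0 ≤ w y)
    (hw1 : ∀ y, w y ≤ 1) {t x : ℝ} (ht : 0 < t) (hx : x ^ 2 ≤ t) :
    (√t)⁻¹ * gaussianSmoothing t w x ≤
      2 * exp 1 * (√π + ∫ y, w y) * ((1 + √t)⁻¹ * exp (-x ^ 2 / (8 * t))) := by
  have hbound := inv_sqrt_mul_gaussianSmoothing_le hw hw0 hw1 one_pos ht x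
  rw [one_mul, mul_one] at hbound
  have hexp : 1 ≤ exp 1 * exp (-x ^ 2 / (8 * t)) := by
    rw [← exp_add]
    refine one_le_exp ?_
    rw [neg_div, ← sub_eq_add_neg, sub_nonneg, div_le_one (by positivity)]
    linarith
  have hK : 0 ≤ ∫ y, w y := integral_nonneg hw0
  calc (√t)⁻¹ * gaussianSmoothing t w x ≤ 2 * (√π + ∫ y, w y) * (1 + √t)⁻¹ * 1 := by
        simpa [div_eq_mul_inv] using hbound
    _ ≤ 2 * (√π + ∫ y, w y) * (1 + √t)⁻¹ * (exp 1 * exp (-x ^ 2 / (8 * t))) := by gcongr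
    _ = _ := by ring

end

/-- Convolution of a heat-kernel Gaussian with an algebraically decaying profile,
combined algebraic-plus-Gaussian form. -/
theorem gaussian_conv_algebraic (r : ℝ) (hr : 1 < r) :
    ∃ C > (0:ℝ), ∃ M > (1:ℝ), ∀ t > (0:ℝ), ∀ x : ℝ,
      (∫ y : ℝ, t ^ (-(1:ℝ)/2) * Real.exp (-(x - y)^2 / t) * (1 + |y|) ^ (-r)) ≤
        C * ((1 + |x| + Real.sqrt t) ^ (-r) +
          (1 + Real.sqrt t)⁻¹ * Real.exp (-x^2 / (M * t))) := by
  set w : ℝ → ℝ := fun y => (1 + |y|) ^ (-r)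
  have hw : Integrable w := integrable_one_add_abs_rpow_neg hr
  have hw0 (y : ℝ) : 0 ≤ w y := by positivity
  have hw1 (y : ℝ) : w y ≤ 1 :=
    rpow_le_one_of_one_le_of_nonpos (by linarith [abs_nonneg y]) (by linarith)
  set K := ∫ y, w y
  have hK : 0 ≤ K := integral_nonneg hw0
  refine ⟨4 ^ r * √π + 2 * (√(π * 2) + K) + 2 * exp 1 * (√π + K), by positivity, 8, by norm_num,
    fun t ht x => ?_⟩
  rw [integral_rpow_neg_half_mul_exp_mul_eq ht.le]
  have hT : 0 ≤ (1 + |x| + √t) ^ (-r) := by positivity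
  have hG : 0 ≤ (1 + √t)⁻¹ * exp (-x ^ 2 / (8 * t)) := by positivity
  rcases le_or_gt (√t) (1 + |x|) with hsmall | hlarge
  · have hfar : 2 ^ r * (1 + |x|) ^ (-r) ≤ 4 ^ r * (1 + |x| + √t) ^ (-r) := by
      rw [show (4 : ℝ) ^ r = 2 ^ r * 2 ^ r by rw [← mul_rpow zero_le_two zero_le_two]; norm_num,
        mul_assoc]
      gcongr
      exact rpow_neg_le_two_rpow_mul_rpow_neg (by positivity) (by linarith) (by linarith)
    have hbound := inv_sqrt_mul_gaussianSmoothing_le_of_le_of_half_lt_abs hw hw0 hw1 ht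
      (B := 2 ^ r * (1 + |x|) ^ (-r)) (x := x) fun y hy =>
        rpow_neg_le_two_rpow_mul_rpow_neg (by positivity) (by linarith) (by linarith)
    nlinarith [mul_le_mul_of_nonneg_right hfar (sqrt_nonneg π),
      mul_nonneg (by positivity : (0 : ℝ) ≤ 4 ^ r * √π) hG,
      mul_nonneg (by positivity : (0 : ℝ) ≤ 2 * (√(π * 2) + K)) hT,
      mul_nonneg (by positivity : (0 : ℝ) ≤ 2 * exp 1 * (√π + K)) (add_nonneg hT hG)]
  · have hx : x ^ 2 ≤ t := by
      nlinarith [sq_abs x, abs_nonneg x, sq_sqrt ht.le]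
    have hbound := inv_sqrt_mul_gaussianSmoothing_le_of_sq_le hw hw0 hw1 ht hx
    nlinarith [mul_nonneg (by positivity : (0 : ℝ) ≤ 4 ^ r * √π + 2 * (√(π * 2) + K))
        (add_nonneg hT hG),
      mul_nonneg (by positivity : (0 : ℝ) ≤ 2 * exp 1 * (√π + K)) hT]
end

section
/- For all x ∈ ℝ, t ≥ 0 and r > 1, the elementary inequality min(t^{-1/2}, (1+|x|)^{-r}) ≤ C[(1+|x|+√t)^{-r} + (1+√t)^{-1} exp(-|x|²/(M t))] holds for suitable constants C > 0 and M > 1 independent of x and t. -/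
open Real

/-- Elementary pointwise comparison of `min` of algebraic decay factors with a combined
algebraic-plus-Gaussian bound. -/
theorem min_algebraic_le_combined (r : ℝ) (hr : 1 < r) :
    ∃ C > (0:ℝ), ∃ M > (1:ℝ), ∀ x t : ℝ, 0 ≤ t →
      min (t ^ (-(1:ℝ)/2)) ((1 + |x|) ^ (-r)) ≤
        C * ((1 + |x| + Real.sqrt t) ^ (-r) +
          (1 + Real.sqrt t)⁻¹ * Real.exp (-x^2 / (M * t))) := by
  refine ⟨2 ^ r + 2 * Real.exp 1, by positivity, 2, by norm_num, ?_⟩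
  intro x t ht
  have hx : (0:ℝ) ≤ |x| := abs_nonneg x
  have hst : 0 ≤ Real.sqrt t := Real.sqrt_nonneg t
  set s := Real.sqrt t with hs
  have hA : (0:ℝ) ≤ (1 + |x| + s) ^ (-r) := by positivity
  have hB : (0:ℝ) ≤ (1 + s)⁻¹ * Real.exp (-x ^ 2 / (2 * t)) := by positivity
  have h2r : (0:ℝ) < 2 ^ r := by positivity
  have hepos : (0:ℝ) < Real.exp 1 := Real.exp_pos 1
  by_cases hcase : s ≤ 1 ∨ s ≤ |x|
  · -- algebraic case
    have hle : 1 + |x| + s ≤ 2 * (1 + |x|) := by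
      rcases hcase with h | h <;> linarith
    have hkey : (1 + |x|) ^ (-r) ≤ 2 ^ r * (1 + |x| + s) ^ (-r) := by
      have hb : (0:ℝ) < 1 + |x| + s := by linarith
      have hpow : (1 + |x| + s) ^ r ≤ (2 * (1 + |x|)) ^ r :=
        Real.rpow_le_rpow (by linarith) hle (by linarith)
      have hmul : (2 * (1 + |x|)) ^ r = 2 ^ r * (1 + |x|) ^ r :=
        Real.mul_rpow (by norm_num) (by linarith)
      rw [Real.rpow_neg (by linarith : (0:ℝ) ≤ 1 + |x|),
        Real.rpow_neg (le_of_lt hb)]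
      have hb2 : (0:ℝ) < (1 + |x| + s) ^ r := Real.rpow_pos_of_pos hb r
      have hb1 : (0:ℝ) < (1 + |x|) ^ r := Real.rpow_pos_of_pos (by linarith) r
      calc ((1 + |x|) ^ r)⁻¹ = 2 ^ r * ((2 * (1 + |x|)) ^ r)⁻¹ := by
            rw [hmul, mul_inv]; field_simp
        _ ≤ 2 ^ r * ((1 + |x| + s) ^ r)⁻¹ := by
            apply mul_le_mul_of_nonneg_left _ (le_of_lt h2r)
            exact inv_anti₀ hb2 hpow
    calc min (t ^ (-(1:ℝ)/2)) ((1 + |x|) ^ (-r)) ≤ (1 + |x|) ^ (-r) := min_le_right _ _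
      _ ≤ 2 ^ r * (1 + |x| + s) ^ (-r) := hkey
      _ ≤ (2 ^ r + 2 * Real.exp 1) *
          ((1 + |x| + s) ^ (-r) + (1 + s)⁻¹ * Real.exp (-x ^ 2 / (2 * t))) := by
          nlinarith [mul_nonneg (le_of_lt h2r) hB, mul_nonneg (le_of_lt hepos) hA,
            mul_nonneg (le_of_lt hepos) hB]
  · push_neg at hcase
    obtain ⟨hs1, hsx⟩ := hcase
    have hspos : (0:ℝ) < s := by linarith
    have htpos : (0:ℝ) < t := by
      by_contra h
      have : t = 0 := le_antisymm (by linarith) ht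
      simp [this] at hs; rw [hs] at hspos; linarith
    have hts : t = s ^ 2 := (Real.sq_sqrt ht).symm
    -- t ^ (-(1:ℝ)/2) = s⁻¹
    have hpow : t ^ (-(1:ℝ)/2) = s⁻¹ := by
      rw [show (-(1:ℝ)/2) = -(1/2) by ring, Real.rpow_neg ht, hs,
        Real.sqrt_eq_rpow]
    -- x^2 / (2t) ≤ 1/2, so exp(-x^2/(2t)) ≥ exp(-1/2) ≥ (exp 1)⁻¹
    have hx2 : x ^ 2 ≤ t := by
      rw [hts]; have := sq_abs x; nlinarith
    have hE : Real.exp (-(1:ℝ)) ≤ Real.exp (-x ^ 2 / (2 * t)) := by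
      apply Real.exp_le_exp.mpr
      rw [neg_div, neg_le_neg_iff]
      rw [div_le_one (by linarith)]
      linarith
    have hinv : s⁻¹ ≤ 2 * (1 + s)⁻¹ := by
      rw [inv_le_iff_one_le_mul₀' hspos]
      have h1 : (0:ℝ) < 1 + s := by linarith
      have : (1 + s) * (1 + s)⁻¹ = 1 := mul_inv_cancel₀ (ne_of_gt h1)
      nlinarith [inv_pos.mpr h1]
    have hEe : (1:ℝ) ≤ Real.exp 1 * Real.exp (-x ^ 2 / (2 * t)) := by
      calc (1:ℝ) = Real.exp 1 * Real.exp (-(1:ℝ)) := by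
            rw [← Real.exp_add]; norm_num
        _ ≤ Real.exp 1 * Real.exp (-x ^ 2 / (2 * t)) := by
            exact mul_le_mul_of_nonneg_left hE (le_of_lt hepos)
    calc min (t ^ (-(1:ℝ)/2)) ((1 + |x|) ^ (-r)) ≤ t ^ (-(1:ℝ)/2) := min_le_left _ _
      _ = s⁻¹ := hpow
      _ ≤ 2 * (1 + s)⁻¹ := hinv
      _ ≤ 2 * Real.exp 1 * ((1 + s)⁻¹ * Real.exp (-x ^ 2 / (2 * t))) := by
          have h1 : (0:ℝ) ≤ (1 + s)⁻¹ := by positivity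
          nlinarith [mul_le_mul_of_nonneg_left hEe h1]
      _ ≤ (2 ^ r + 2 * Real.exp 1) *
          ((1 + |x| + s) ^ (-r) + (1 + s)⁻¹ * Real.exp (-x ^ 2 / (2 * t))) := by
          nlinarith [mul_nonneg (le_of_lt h2r) hA, mul_nonneg (le_of_lt h2r) hB,
            mul_nonneg (le_of_lt hepos) hA]
end

section
/- For every r > 1 and M > 0 there exist C > 0 and M' > M such that for all t ≥ 0, all x ∈ ℝ, and all w with 0 < w < 1: ∫_{-∞}^{∞} (1+t)^{-1/2} exp(-|x-wy|²/(M(1+t))) (1+|y|)^{-r} dy ≤ C[ (1+|x|+√t)^{-r} + (1+t)^{-1/2} exp(-|x|²/(M'(1+t))) ], uniformly in w. -/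
/-!
Split the real line according to whether `|x - w y| ≥ |x| / 2`. Where it is, the Gaussian
factor is at most `exp (-x² / (4 M (1 + t)))`, which gives the second term with `M' = 4 M`.
Where it is not, `w |y| > |x| / 2`, so the weight is at most `(2 w / |x|) ^ r`, while the
Gaussian integrates to `w⁻¹ √(π M (1 + t))`; the product carries the factor `w ^ (r - 1) ≤ 1`,
hence the uniformity in `w`, and for `|x| ≥ √(1 + t)` the remaining `|x| ^ (-r)` is comparable
to `(1 + |x| + √t) ^ (-r)`. For `|x| ≤ √(1 + t)` the second term alone suffices, its exponent
being at least `-1 / (4 M)`.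
-/

open MeasureTheory Real

lemma integrable_exp_neg_sq_sub_mul_div {s w : ℝ} (hs : 0 < s) (x : ℝ) (hw : w ≠ 0) :
    Integrable fun y : ℝ => exp (-(x - w * y) ^ 2 / s) := by
  have hG : Integrable fun z : ℝ => exp (-s⁻¹ * z ^ 2) := integrable_exp_neg_mul_sq (by positivity)
  simpa [neg_div, div_eq_inv_mul] using (hG.comp_sub_left x).comp_mul_left' hw

lemma integral_exp_neg_sq_sub_mul_div (s x w : ℝ) :
    ∫ y : ℝ, exp (-(x - w * y) ^ 2 / s) = |w|⁻¹ * √(π * s) := by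
  have h := Measure.integral_comp_mul_left (fun u : ℝ => exp (-s⁻¹ * (x - u) ^ 2)) w
  rw [integral_sub_left_eq_self (fun z : ℝ => exp (-s⁻¹ * z ^ 2)) volume x, integral_gaussian,
    div_inv_eq_mul, abs_inv] at h
  simpa [neg_div, div_eq_inv_mul] using h

lemma exp_neg_sq_div_le_of_abs_le {s a b : ℝ} (hs : 0 ≤ s) (h : |a| ≤ |b|) :
    exp (-b ^ 2 / s) ≤ exp (-a ^ 2 / s) := by
  gcongr exp (?_ / s)
  exact neg_le_neg (sq_le_sq.2 h)

lemma rpow_neg_le_of_le_mul {a b k r : ℝ} (ha : 0 < a) (hb : 0 < b) (hba : b ≤ k * a)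
    (hr : 0 ≤ r) : a ^ (-r) ≤ k ^ r * b ^ (-r) := by
  have hk : 0 < k := pos_of_mul_pos_left (hb.trans_le hba) ha.le
  calc a ^ (-r) = k ^ r * (k * a) ^ (-r) := by
        rw [mul_rpow hk.le ha.le, rpow_neg hk.le, ← mul_assoc, mul_inv_cancel₀ (by positivity),
          one_mul]
    _ ≤ k ^ r * b ^ (-r) :=
        mul_le_mul_of_nonneg_left (rpow_le_rpow_of_nonpos hb hba (by linarith)) (by positivity)

lemma mul_rpow_mul_inv_le_rpow {u w r : ℝ} (hu : 0 ≤ u) (hw₀ : 0 < w) (hw₁ : w ≤ 1)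
    (hr : 1 ≤ r) : (w * u) ^ r * w⁻¹ ≤ u ^ r := by
  have : w ^ r * w⁻¹ ≤ 1 := by
    rw [← rpow_neg_one, ← rpow_add hw₀]
    exact rpow_le_one hw₀.le hw₁ (by linarith)
  calc (w * u) ^ r * w⁻¹ = (w ^ r * w⁻¹) * u ^ r := by rw [mul_rpow hw₀.le hu]; ring
    _ ≤ u ^ r := mul_le_of_le_one_left (by positivity) this

lemma rpow_neg_half_mul_sqrt_mul {a : ℝ} (ha : 0 < a) (c : ℝ) :
    a ^ (-(1:ℝ)/2) * √(c * a) = √c := by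
  rw [sqrt_mul' c ha.le, sqrt_eq_rpow a, mul_left_comm, ← rpow_add ha]
  norm_num

lemma exp_neg_sq_sub_mul_div_mul_le {s r w x : ℝ} (hs : 0 ≤ s) (hr : 0 ≤ r) (hw : 0 < w)
    (y : ℝ) :
    exp (-(x - w * y) ^ 2 / s) * (1 + |y|) ^ (-r) ≤
      exp (-x ^ 2 / (4 * s)) * (1 + |y|) ^ (-r) +
        (2 * w / |x|) ^ r * exp (-(x - w * y) ^ 2 / s) := by
  rcases le_or_gt |x| (2 * |x - w * y|) with hnear | hfar
  · have hexp : exp (-(x - w * y) ^ 2 / s) ≤ exp (-x ^ 2 / (4 * s)) := by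
      rw [show -x ^ 2 / (4 * s) = -(x / 2) ^ 2 / s by ring]
      exact exp_neg_sq_div_le_of_abs_le hs (by rw [abs_div, abs_two]; linarith)
    calc _ ≤ exp (-x ^ 2 / (4 * s)) * (1 + |y|) ^ (-r) := by gcongr
      _ ≤ _ := le_add_of_nonneg_right (by positivity)
  · have hxy : |x| < 2 * (w * |y|) := by
      have := abs_sub_abs_le_abs_sub x (x - w * y)
      rw [sub_sub_cancel, abs_mul, abs_of_pos hw] at this
      linarith
    have hx : 0 < |x| := by linarith [abs_nonneg (x - w * y)]
    have hdecay : (1 + |y|) ^ (-r) ≤ (2 * w / |x|) ^ r :=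
      calc (1 + |y|) ^ (-r) ≤ (|x| / (2 * w)) ^ (-r) :=
            rpow_le_rpow_of_nonpos (by positivity)
              (by rw [div_le_iff₀ (by positivity)]; linarith [abs_nonneg y]) (by linarith)
        _ = (2 * w / |x|) ^ r := by
            rw [rpow_neg (by positivity), ← inv_rpow (by positivity), inv_div]
    calc _ ≤ (2 * w / |x|) ^ r * exp (-(x - w * y) ^ 2 / s) := by
          rw [mul_comm]; gcongr
      _ ≤ _ := le_add_of_nonneg_left (by positivity)

lemma integral_exp_neg_sq_sub_mul_div_mul_le_integral {s w x : ℝ} {f : ℝ → ℝ} (hs : 0 ≤ s)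
    (hf : Integrable f) (hf₀ : 0 ≤ f) :
    ∫ y, exp (-(x - w * y) ^ 2 / s) * f y ≤ ∫ y, f y := by
  refine integral_mono_of_nonneg (ae_of_all _ fun y => mul_nonneg (exp_pos _).le (hf₀ y)) hf
    (ae_of_all _ fun y => mul_le_of_le_one_left (hf₀ y) ?_)
  rw [exp_le_one_iff]
  exact div_nonpos_of_nonpos_of_nonneg (neg_nonpos.2 (sq_nonneg _)) hs

lemma integral_exp_neg_sq_sub_mul_div_mul_le {s r w x : ℝ} (hs : 0 < s) (hr : 1 < r)
    (hw : 0 < w) :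
    ∫ y, exp (-(x - w * y) ^ 2 / s) * (1 + |y|) ^ (-r) ≤
      exp (-x ^ 2 / (4 * s)) * (∫ y, (1 + |y|) ^ (-r)) + (2 * w / |x|) ^ r * (w⁻¹ * √(π * s)) := by
  have hf := (integrable_one_add_abs_rpow_neg hr).const_mul (exp (-x ^ 2 / (4 * s)))
  have hg := (integrable_exp_neg_sq_sub_mul_div hs x hw.ne').const_mul ((2 * w / |x|) ^ r)
  calc _ ≤ ∫ y, (exp (-x ^ 2 / (4 * s)) * (1 + |y|) ^ (-r) +
          (2 * w / |x|) ^ r * exp (-(x - w * y) ^ 2 / s)) :=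
        integral_mono_of_nonneg (ae_of_all _ fun y => by positivity) (hf.add hg)
          (ae_of_all _ (exp_neg_sq_sub_mul_div_mul_le hs.le (by linarith) hw))
    _ = _ := by
        rw [integral_add hf hg, integral_const_mul, integral_const_mul,
          integral_exp_neg_sq_sub_mul_div, abs_of_pos hw]

lemma one_le_exp_inv_mul_exp_neg_sq_div {a T x : ℝ} (ha : 0 < a) (hT : 0 < T) (hx : x ^ 2 ≤ T) :
    1 ≤ exp a⁻¹ * exp (-x ^ 2 / (a * T)) := by
  have : x ^ 2 / (a * T) ≤ a⁻¹ := by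
    rw [div_le_iff₀ (by positivity), show a⁻¹ * (a * T) = T by field_simp]
    exact hx
  rw [← exp_add, one_le_exp_iff, neg_div]
  linarith

lemma rpow_neg_half_mul_integral_le_of_sq_lt {r M t x w : ℝ} (hr : 1 < r) (hM : 0 < M)
    (ht : 0 ≤ t) (hw₀ : 0 < w) (hw₁ : w ≤ 1) (hx : 1 + t < x ^ 2) :
    (1 + t) ^ (-(1:ℝ)/2) * ∫ y, exp (-(x - w * y) ^ 2 / (M * (1 + t))) * (1 + |y|) ^ (-r) ≤
      (1 + t) ^ (-(1:ℝ)/2) * exp (-x ^ 2 / (4 * M * (1 + t))) * (∫ y, (1 + |y|) ^ (-r)) +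
        2 ^ r * 3 ^ r * √(π * M) * (1 + |x| + √t) ^ (-r) := by
  have hx₁ : 1 ≤ |x| := one_le_sq_iff_one_le_abs _ |>.1 (by linarith)
  have hxt : √t ≤ |x| := by
    rw [← sqrt_sq_eq_abs]
    exact sqrt_le_sqrt (by linarith)
  have hJ :=
    integral_exp_neg_sq_sub_mul_div_mul_le (x := x) (by positivity : 0 < M * (1 + t)) hr hw₀
  rw [← mul_assoc 4 M] at hJ
  have htail : (1 + t) ^ (-(1:ℝ)/2) * ((2 * w / |x|) ^ r * (w⁻¹ * √(π * (M * (1 + t))))) ≤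
      2 ^ r * 3 ^ r * √(π * M) * (1 + |x| + √t) ^ (-r) :=
    calc _ = (w * (2 / |x|)) ^ r * w⁻¹ * ((1 + t) ^ (-(1:ℝ)/2) * √(π * M * (1 + t))) := by
          rw [show 2 * w / |x| = w * (2 / |x|) by ring, ← mul_assoc π]
          ring
      _ ≤ (2 / |x|) ^ r * √(π * M) := by
          rw [rpow_neg_half_mul_sqrt_mul (by linarith)]
          gcongr
          exact mul_rpow_mul_inv_le_rpow (by positivity) hw₀ hw₁ hr.le
      _ = 2 ^ r * |x| ^ (-r) * √(π * M) := by
          rw [div_rpow zero_le_two (by positivity), rpow_neg (by positivity)]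
          ring
      _ ≤ 2 ^ r * (3 ^ r * (1 + |x| + √t) ^ (-r)) * √(π * M) := by
          gcongr
          exact rpow_neg_le_of_le_mul (by positivity) (by positivity) (by linarith) (by linarith)
      _ = _ := by ring
  calc _ ≤ (1 + t) ^ (-(1:ℝ)/2) * (exp (-x ^ 2 / (4 * M * (1 + t))) * (∫ y, (1 + |y|) ^ (-r)) +
        (2 * w / |x|) ^ r * (w⁻¹ * √(π * (M * (1 + t))))) := by gcongr
    _ ≤ _ := by
        rw [mul_add, ← mul_assoc]
        exact add_le_add_right htail _

/-- Scaled-argument Gaussian convolution bound against algebraically decaying data,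
uniform in the intermediate parameter `w ∈ (0,1)`. -/
theorem scaled_gaussian_conv_algebraic (r M : ℝ) (hr : 1 < r) (hM : 0 < M) :
    ∃ C > (0:ℝ), ∃ M' > M, ∀ t ≥ (0:ℝ), ∀ x w : ℝ, 0 < w → w < 1 →
      (∫ y : ℝ, (1 + t) ^ (-(1:ℝ)/2) * Real.exp (-(x - w*y)^2 / (M*(1+t))) *
          (1 + |y|) ^ (-r)) ≤
        C * ((1 + |x| + Real.sqrt t) ^ (-r) +
          (1 + t) ^ (-(1:ℝ)/2) * Real.exp (-x^2 / (M'*(1+t)))) := by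
  set I := ∫ y : ℝ, (1 + |y|) ^ (-r)
  have hI : 0 ≤ I := integral_nonneg fun y => by positivity
  set K := 2 ^ r * 3 ^ r * √(π * M)
  refine ⟨I * exp (4 * M)⁻¹ + K, by positivity, 4 * M, by linarith, ?_⟩
  intro t ht x w hw₀ hw₁
  have ht₁ : 0 < 1 + t := by linarith
  set P := (1 + t) ^ (-(1:ℝ)/2)
  set E := exp (-x ^ 2 / (4 * M * (1 + t)))
  set A := (1 + |x| + √t) ^ (-r)
  have hPE : 0 ≤ P * E := by positivity
  simp only [mul_assoc P, integral_const_mul]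
  suffices h : P * ∫ y, exp (-(x - w * y) ^ 2 / (M * (1 + t))) * (1 + |y|) ^ (-r) ≤
      I * exp (4 * M)⁻¹ * (P * E) + K * A by
    nlinarith [mul_nonneg (mul_nonneg hI (exp_pos (4 * M)⁻¹).le) (by positivity : 0 ≤ A),
      mul_nonneg (by positivity : 0 ≤ K) hPE]
  rcases le_or_gt (x ^ 2) (1 + t) with hsmall | hlarge
  · calc _ ≤ P * I := by
          gcongr
          exact integral_exp_neg_sq_sub_mul_div_mul_le_integral (by positivity)
            (integrable_one_add_abs_rpow_neg hr) fun y => by positivity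
      _ = P * I * 1 := (mul_one _).symm
      _ ≤ P * I * (exp (4 * M)⁻¹ * E) := by
          gcongr
          exact one_le_exp_inv_mul_exp_neg_sq_div (by positivity) ht₁ hsmall
      _ = I * exp (4 * M)⁻¹ * (P * E) := by ring
      _ ≤ _ := le_add_of_nonneg_right (by positivity)
  · calc _ ≤ P * E * I + K * A :=
          rpow_neg_half_mul_integral_le_of_sq_lt hr hM ht hw₀ hw₁.le hlarge
      _ ≤ _ := by
          refine add_le_add_left ?_ _
          calc P * E * I = I * 1 * (P * E) := by ring
            _ ≤ _ := by gcongr; exact one_le_exp (by positivity)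
end
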